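/- arXiv:2009.09892 — 3 statements merged into one kernel-verified Lean document; each statement's English description precedes it below -/
import Mathlib

section
/- Let H be a complex Hilbert space and A, B bounded linear operators on H. Then ‖A + B‖ ≤ sqrt(‖A*A + B*B‖ + 2·ω(B*A)). -/
/-! Since `‖(A + B) x‖² = Re ⟪(A†A + B†B) x, x⟫ + 2 Re ⟪(B†A) x, x⟫`, the first term is at most
`‖A†A + B†B‖ ‖x‖²`, and the second, by homogeneity of `x ↦ ⟪C x, x⟫`, at most `2 ω(B†A) ‖x‖²`. -/

/-- The numerical radius of a bounded linear operator on a complex Hilbert space: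
`ω(A) = sup { ‖⟨Ax, x⟩‖ : ‖x‖ = 1 }`. -/
noncomputable def numericalRadius {H : Type*} [NormedAddCommGroup H] [InnerProductSpace ℂ H]
    [CompleteSpace H] (A : H →L[ℂ] H) : ℝ :=
  ⨆ x : {x : H // ‖x‖ = 1}, ‖(inner ℂ (A x) (x : H) : ℂ)‖

open ContinuousLinearMap

section

variable {H : Type*} [NormedAddCommGroup H] [InnerProductSpace ℂ H]

lemma norm_inner_apply_self_le (C : H →L[ℂ] H) (x : H) :
    ‖(inner ℂ (C x) x : ℂ)‖ ≤ ‖C‖ * ‖x‖ ^ 2 :=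
  calc ‖(inner ℂ (C x) x : ℂ)‖ ≤ ‖C x‖ * ‖x‖ := norm_inner_le_norm _ _
    _ ≤ ‖C‖ * ‖x‖ * ‖x‖ := by gcongr; exact C.le_opNorm x
    _ = ‖C‖ * ‖x‖ ^ 2 := by ring

lemma bddAbove_norm_inner_apply_self_sphere (C : H →L[ℂ] H) :
    BddAbove (Set.range fun x : {x : H // ‖x‖ = 1} => ‖(inner ℂ (C x) (x : H) : ℂ)‖) := by
  refine ⟨‖C‖, ?_⟩
  rintro _ ⟨⟨x, hx⟩, rfl⟩
  simpa [hx] using norm_inner_apply_self_le C x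

variable [CompleteSpace H]

lemma numericalRadius_nonneg (C : H →L[ℂ] H) : 0 ≤ numericalRadius C :=
  Real.iSup_nonneg fun _ => norm_nonneg _

lemma norm_inner_apply_self_le_numericalRadius_mul_sq (C : H →L[ℂ] H) (x : H) :
    ‖(inner ℂ (C x) x : ℂ)‖ ≤ numericalRadius C * ‖x‖ ^ 2 := by
  rcases eq_or_ne x 0 with rfl | hx
  · simp
  have hx' : ‖x‖ ≠ 0 := norm_ne_zero_iff.mpr hx
  set u : H := ((‖x‖⁻¹ : ℝ) : ℂ) • x
  have hu : ‖u‖ = 1 := by simp [u, norm_smul, hx']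
  have hinner : (inner ℂ (C u) u : ℂ) = ((‖x‖⁻¹ : ℝ) : ℂ) ^ 2 * inner ℂ (C x) x := by
    simp only [u, map_smul, inner_smul_left, inner_smul_right, Complex.conj_ofReal]
    ring
  have hle : ‖(inner ℂ (C u) u : ℂ)‖ ≤ numericalRadius C :=
    le_ciSup (bddAbove_norm_inner_apply_self_sphere C) (⟨u, hu⟩ : {y : H // ‖y‖ = 1})
  rw [hinner, norm_mul, norm_pow, Complex.norm_real, Real.norm_of_nonneg (by positivity),
    inv_pow, inv_mul_le_iff₀ (by positivity)] at hle
  linarith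

lemma norm_add_apply_sq (A B : H →L[ℂ] H) (x : H) :
    ‖(A + B) x‖ ^ 2 = (inner ℂ ((adjoint A * A + adjoint B * B) x) x : ℂ).re +
      2 * (inner ℂ ((adjoint B * A) x) x : ℂ).re := by
  have hBA : (inner ℂ ((adjoint B * A) x) x : ℂ) = inner ℂ (A x) (B x) :=
    adjoint_inner_left B x (A x)
  rw [add_apply, norm_add_sq (𝕜 := ℂ), apply_norm_sq_eq_inner_adjoint_left A,
    apply_norm_sq_eq_inner_adjoint_left B, hBA, add_apply, inner_add_left, Complex.add_re]
  simp only [RCLike.re_to_complex, ← mul_def]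
  ring

end

theorem norm_add_le_sqrt_norm_add_two_numericalRadius
    {H : Type*} [NormedAddCommGroup H] [InnerProductSpace ℂ H] [CompleteSpace H]
    (A B : H →L[ℂ] H) :
    ‖A + B‖ ≤ Real.sqrt
      (‖ContinuousLinearMap.adjoint A * A + ContinuousLinearMap.adjoint B * B‖ +
        2 * numericalRadius (ContinuousLinearMap.adjoint B * A)) := by
  set C := adjoint A * A + adjoint B * B
  set D := adjoint B * A
  refine opNorm_le_bound _ (Real.sqrt_nonneg _) fun x => ?_
  have hsq : ‖(A + B) x‖ ^ 2 ≤ (‖C‖ + 2 * numericalRadius D) * ‖x‖ ^ 2 := by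
    have hC := (Complex.re_le_norm _).trans (norm_inner_apply_self_le C x)
    have hD := (Complex.re_le_norm _).trans (norm_inner_apply_self_le_numericalRadius_mul_sq D x)
    rw [norm_add_apply_sq]
    linarith
  have hK : 0 ≤ ‖C‖ + 2 * numericalRadius D := by
    have := numericalRadius_nonneg D
    positivity
  calc ‖(A + B) x‖ = Real.sqrt (‖(A + B) x‖ ^ 2) := (Real.sqrt_sq (norm_nonneg _)).symm
    _ ≤ Real.sqrt ((‖C‖ + 2 * numericalRadius D) * ‖x‖ ^ 2) := Real.sqrt_le_sqrt hsq
    _ = Real.sqrt (‖C‖ + 2 * numericalRadius D) * ‖x‖ := by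
      rw [Real.sqrt_mul hK, Real.sqrt_sq (norm_nonneg _)]
end

section
/- Let H be a complex Hilbert space and A, B positive bounded linear operators on H. Then ‖A − B‖ ≤ max(‖A‖, ‖B‖) − min(m(A), m(B)), where m(T) = inf{⟨Tx, x⟩ : x ∈ H, ‖x‖ = 1}. -/
/-- `m(T) = inf { ⟨Tx, x⟩ : ‖x‖ = 1 }` (the real part of the quadratic form, which is
`⟨Tx, x⟩` itself for self-adjoint `T`). -/
noncomputable def minQuadForm {H : Type*} [NormedAddCommGroup H] [InnerProductSpace ℂ H]
    [CompleteSpace H] (T : H →L[ℂ] H) : ℝ :=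
  ⨅ x : {x : H // ‖x‖ = 1}, (inner ℂ (T x) (x : H) : ℂ).re

/-!
For a symmetric operator `T`, `‖T‖` is the supremum of `|⟨Tx, x⟩| / ‖x‖²`. For `x ≠ 0` the
Rayleigh quotients of `A` and of `B` at `x` both lie in `[min (m A) (m B), max ‖A‖ ‖B‖]`, so
the Rayleigh quotient of `A - B`, their difference, is bounded in absolute value by the length
of that interval.
-/

open Set

namespace ContinuousLinearMap

section RCLike

variable {𝕜 E : Type*} [RCLike 𝕜] [NormedAddCommGroup E] [InnerProductSpace 𝕜 E]

theorem rayleighQuotient_sub (T S : E →L[𝕜] E) (x : E) :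
    (T - S).rayleighQuotient x = T.rayleighQuotient x - S.rayleighQuotient x := by
  rw [sub_eq_add_neg, rayleighQuotient_add, rayleighQuotient_neg_apply, ← sub_eq_add_neg]

theorem rayleighQuotient_le_opNorm (T : E →L[𝕜] E) (x : E) : T.rayleighQuotient x ≤ ‖T‖ :=
  (le_abs_self _).trans (T.rayleighQuotient_le_norm x)

theorem norm_le_of_forall_abs_rayleighQuotient_le {T : E →L[𝕜] E}
    (hT : (T : E →ₗ[𝕜] E).IsSymmetric) {c : ℝ} (h : ∀ x, |T.rayleighQuotient x| ≤ c) :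
    ‖T‖ ≤ c :=
  T.norm_eq_iSup_rayleighQuotient hT ▸ ciSup_le h

theorem rayleighQuotient_of_norm_eq_one (T : E →L[𝕜] E) {u : E} (hu : ‖u‖ = 1) :
    T.rayleighQuotient u = RCLike.re (inner 𝕜 (T u) u) := by
  simp [rayleighQuotient, reApplyInnerSelf_apply, hu]

end RCLike

variable {H : Type*} [NormedAddCommGroup H] [InnerProductSpace ℂ H] [CompleteSpace H]

theorem minQuadForm_le_rayleighQuotient (T : H →L[ℂ] H) {x : H} (hx : x ≠ 0) :
    minQuadForm T ≤ T.rayleighQuotient x := by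
  have hbdd : BddBelow (range fun u : {u : H // ‖u‖ = 1} ↦ RCLike.re (inner ℂ (T u) (u : H))) :=
    ⟨-‖T‖, forall_mem_range.2 fun u ↦
      (neg_le_of_abs_le (T.rayleighQuotient_le_norm u)).trans_eq
        (T.rayleighQuotient_of_norm_eq_one u.2)⟩
  have hnorm : ‖(‖x‖⁻¹ : ℂ) • x‖ = 1 := by
    simp [norm_smul, inv_mul_cancel₀ (norm_ne_zero_iff.mpr hx)]
  calc minQuadForm T ≤ RCLike.re (inner ℂ (T ((‖x‖⁻¹ : ℂ) • x)) ((‖x‖⁻¹ : ℂ) • x)) :=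
        ciInf_le hbdd ⟨_, hnorm⟩
    _ = T.rayleighQuotient x := by
      rw [← T.rayleighQuotient_of_norm_eq_one hnorm, T.rayleigh_smul x (by simpa using hx)]

theorem rayleighQuotient_mem_Icc (T : H →L[ℂ] H) {x : H} (hx : x ≠ 0) :
    T.rayleighQuotient x ∈ Icc (minQuadForm T) ‖T‖ :=
  ⟨T.minQuadForm_le_rayleighQuotient hx, T.rayleighQuotient_le_opNorm x⟩

theorem minQuadForm_le_norm (T : H →L[ℂ] H) : minQuadForm T ≤ ‖T‖ := by
  rcases subsingleton_or_nontrivial H with _ | _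
  · have : IsEmpty {u : H // ‖u‖ = 1} := ⟨fun u ↦ by simpa [Subsingleton.elim u.1 0] using u.2⟩
    rw [minQuadForm, Real.iInf_of_isEmpty]
    exact norm_nonneg T
  · obtain ⟨x, hx⟩ := exists_ne (0 : H)
    exact (T.rayleighQuotient_mem_Icc hx).1.trans (T.rayleighQuotient_mem_Icc hx).2

end ContinuousLinearMap

open ContinuousLinearMap

theorem norm_sub_le_max_norm_sub_min_inf
    {H : Type*} [NormedAddCommGroup H] [InnerProductSpace ℂ H] [CompleteSpace H]
    (A B : H →L[ℂ] H) (hA : A.IsPositive) (hB : B.IsPositive) :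
    ‖A - B‖ ≤ max ‖A‖ ‖B‖ - min (minQuadForm A) (minQuadForm B) := by
  have hA_mem {x : H} (hx : x ≠ 0) :
      A.rayleighQuotient x ∈ Icc (min (minQuadForm A) (minQuadForm B)) (max ‖A‖ ‖B‖) :=
    Icc_subset_Icc (min_le_left _ _) (le_max_left _ _) (A.rayleighQuotient_mem_Icc hx)
  have hB_mem {x : H} (hx : x ≠ 0) :
      B.rayleighQuotient x ∈ Icc (min (minQuadForm A) (minQuadForm B)) (max ‖A‖ ‖B‖) :=
    Icc_subset_Icc (min_le_right _ _) (le_max_right _ _) (B.rayleighQuotient_mem_Icc hx)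
  refine norm_le_of_forall_abs_rayleighQuotient_le (hA.isSymmetric.sub hB.isSymmetric) fun x ↦ ?_
  rcases eq_or_ne x 0 with rfl | hx
  · simpa using (min_le_left _ _).trans ((minQuadForm_le_norm A).trans (le_max_left _ _))
  · rw [rayleighQuotient_sub, ← Real.dist_eq]
    exact Real.dist_le_of_mem_Icc (hA_mem hx) (hB_mem hx)
end

section
/- Let H be a complex Hilbert space and A a bounded linear operator on H. Then for any real r ≥ 2: ω(A)^r ≤ (1/2)·‖ |A|^r + |A*|^r + |A|^{r/2} + |A*|^{r/2} + I − sqrt(2(|A|^r + |A*|^r + |A|^{r/2} + |A*|^{r/2}) + I) ‖ ≤ (1/2)·‖ |A|^r + |A*|^r ‖, where |A| = (A*A)^{1/2}, |A*| = (AA*)^{1/2}, I is the identity operator, powers and square roots of positive operators are taken via the continuous functional calculus. -/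
/-- The absolute value `|A| = (A*A)^(1/2)` of a bounded operator, via the square root
from the continuous functional calculus. -/
noncomputable def opAbs {H : Type*} [NormedAddCommGroup H] [InnerProductSpace ℂ H]
    [CompleteSpace H] (A : H →L[ℂ] H) : H →L[ℂ] H :=
  CFC.sqrt (ContinuousLinearMap.adjoint A * A)

open Polynomial ContinuousLinearMap RCLike Filter Topology
open scoped InnerProductSpace

noncomputable def sqrtGap (t : ℝ) : ℝ := t + 1 - √(2 * t + 1)

lemma continuous_sqrtGap : Continuous sqrtGap := by
  unfold sqrtGap; fun_prop

lemma two_mul_sqrtGap {t : ℝ} (ht : 0 ≤ t) : 2 * sqrtGap t = (√(2 * t + 1) - 1) ^ 2 := by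
  have := Real.sq_sqrt (show 0 ≤ 2 * t + 1 by linarith)
  unfold sqrtGap; nlinarith

lemma sqrtGap_nonneg {t : ℝ} (ht : 0 ≤ t) : 0 ≤ sqrtGap t := by
  have := two_mul_sqrtGap ht
  nlinarith [sq_nonneg (√(2 * t + 1) - 1)]

lemma monotoneOn_sqrtGap : MonotoneOn sqrtGap (Set.Ici 0) := by
  intro a (ha : 0 ≤ a) b (hb : 0 ≤ b) hab
  have h1 : 1 ≤ √(2 * a + 1) := Real.one_le_sqrt.2 (by linarith)
  have h2 : √(2 * a + 1) ≤ √(2 * b + 1) := Real.sqrt_le_sqrt (by linarith)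
  have := two_mul_sqrtGap ha
  have := two_mul_sqrtGap hb
  nlinarith

lemma mul_le_half_sqrtGap {p q : ℝ} (hp : 0 ≤ p) (hq : 0 ≤ q) :
    p * q ≤ sqrtGap (p ^ 2 + q ^ 2 + p + q) / 2 := by
  have h : p + q + 1 ≤ √(2 * (p ^ 2 + q ^ 2 + p + q) + 1) :=
    Real.le_sqrt_of_sq_le (by nlinarith [sq_nonneg (p - q)])
  have := two_mul_sqrtGap (show 0 ≤ p ^ 2 + q ^ 2 + p + q by positivity)
  nlinarith [sq_nonneg (p - q)]

lemma sqrtGap_le {x t s : ℝ} (hx : 0 ≤ x) (hxts : x ≤ t + s) (hst : s ^ 2 ≤ 2 * t) :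
    sqrtGap x ≤ t := by
  have h : s + 1 ≤ √(2 * (t + s) + 1) := Real.le_sqrt_of_sq_le (by nlinarith)
  have := monotoneOn_sqrtGap hx (show 0 ≤ t + s by linarith) hxts
  unfold sqrtGap at this ⊢
  linarith

lemma rpow_tangent_le {s c t : ℝ} (hs : 1 ≤ s) (hc : 0 ≤ c) (ht : 0 ≤ t) :
    s * c ^ (s - 1) * t - (s - 1) * c ^ s ≤ t ^ s := by
  have hs0 : 0 < s := by linarith
  have h := Real.geom_mean_le_arith_mean2_weighted (w₁ := s⁻¹) (w₂ := 1 - s⁻¹)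
    (p₁ := t ^ s) (p₂ := c ^ s) (by positivity) (sub_nonneg.2 (inv_le_one_of_one_le₀ hs))
    (by positivity) (by positivity) (by ring)
  rw [Real.rpow_rpow_inv ht hs0.ne', ← Real.rpow_mul hc,
    show s * (1 - s⁻¹) = s - 1 by field_simp] at h
  have := mul_le_mul_of_nonneg_left h hs0.le
  field_simp at this
  linarith

lemma SemiconjBy.aeval {R B : Type*} [CommSemiring R] [Semiring B] [Algebra R B] {a x y : B}
    (h : SemiconjBy a x y) (p : R[X]) : SemiconjBy a (aeval x p) (aeval y p) := by
  induction p using Polynomial.induction_on' with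
  | add p q hp hq => simpa only [map_add] using hp.add_right hq
  | monomial n c =>
    simp only [aeval_monomial]
    exact SemiconjBy.mul_right (Algebra.commute_algebraMap_left c a).symm (h.pow_right n)

section CStarAlgebra

variable {A : Type*} [CStarAlgebra A] [PartialOrder A] [StarOrderedRing A]

lemma spectrum_subset_Icc_norm {a : A} (ha : 0 ≤ a) : spectrum ℝ a ⊆ Set.Icc 0 ‖a‖ := by
  by_cases! nontriv : Nontrivial A
  · exact fun t ht => ⟨spectrum_nonneg_of_nonneg ha ht,
      (Real.le_norm_self t).trans (spectrum.norm_le_norm_of_mem ht)⟩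
  · simp [spectrum.of_subsingleton]

/-- Both sides are continuous in `f` for uniform convergence on `[0, ‖a‖²]`, which contains both
spectra, and they agree on polynomials because `a (a⋆ a)ⁿ = (a a⋆)ⁿ a`. -/
lemma mul_cfc_star_mul_self (a : A) {f : ℝ → ℝ} (hf : Continuous f) :
    a * cfc f (star a * a) = cfc f (a * star a) * a := by
  have hb : spectrum ℝ (star a * a) ⊆ Set.Icc 0 (‖a‖ ^ 2) := by
    simpa only [CStarRing.norm_star_mul_self, sq] using
      spectrum_subset_Icc_norm (star_mul_self_nonneg a)
  have hc : spectrum ℝ (a * star a) ⊆ Set.Icc 0 (‖a‖ ^ 2) := by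
    simpa only [CStarRing.norm_self_mul_star, sq] using
      spectrum_subset_Icc_norm (mul_star_self_nonneg a)
  choose p hp using fun n : ℕ =>
    exists_polynomial_near_of_continuousOn 0 (‖a‖ ^ 2) f hf.continuousOn (1 / (n + 1))
      Nat.one_div_pos_of_nat
  have hunif : TendstoUniformlyOn (fun n => (p n).eval) f atTop (Set.Icc 0 (‖a‖ ^ 2)) := by
    rw [Metric.tendstoUniformlyOn_iff]
    intro ε hε
    obtain ⟨N, hN⟩ := exists_nat_one_div_lt hε
    filter_upwards [eventually_ge_atTop N] with n hn t ht
    rw [dist_comm, Real.dist_eq]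
    refine (hp n t ht).trans_le (le_trans ?_ hN.le)
    gcongr
  have hcont (s : Set ℝ) : ∀ᶠ n in atTop, ContinuousOn (p n).eval s :=
    .of_forall fun n => (p n).continuous.continuousOn
  have hsemi : SemiconjBy a (star a * a) (a * star a) := (mul_assoc a (star a) a).symm
  have hpoly (n : ℕ) : a * cfc (p n).eval (star a * a) = cfc (p n).eval (a * star a) * a := by
    rw [cfc_polynomial (p n) (star a * a), cfc_polynomial (p n) (a * star a)]
    exact (hsemi.aeval (p n)).eq
  refine tendsto_nhds_unique ((tendsto_cfc_fun (hunif.mono hb) (hcont _)).const_mul a) ?_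
  exact ((tendsto_cfc_fun (hunif.mono hc) (hcont _)).mul_const a).congr fun n => (hpoly n).symm

lemma mul_cfc_inv_sqrt_add_mul_star_le (a : A) {ε : ℝ} (hε : 0 < ε) :
    a * cfc (fun t => (√t + ε)⁻¹) (star a * a) * star a ≤ cfc Real.sqrt (a * star a) := by
  have hpos (t : ℝ) : 0 < √t + ε := by positivity
  have hcont : Continuous fun t => (√t + ε)⁻¹ :=
    (Real.continuous_sqrt.add continuous_const).inv₀ fun t => (hpos t).ne'
  have hid : cfc (fun t => (√t + ε)⁻¹ * t) (a * star a) =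
      cfc (fun t => (√t + ε)⁻¹) (a * star a) * (a * star a) := by
    rw [cfc_mul _ _ _ hcont.continuousOn, cfc_id' ℝ (a * star a)]
  rw [mul_cfc_star_mul_self a hcont, mul_assoc, ← hid]
  refine cfc_mono fun t ht => ?_
  have ht0 := spectrum_nonneg_of_nonneg (mul_star_self_nonneg a) ht
  rw [← div_eq_inv_mul, div_le_iff₀ (hpos t)]
  nlinarith [Real.mul_self_sqrt ht0, Real.sqrt_nonneg t]

lemma cfc_rpow_mul_cfc_rpow {a : A} (ha : 0 ≤ a) {u v : ℝ} (hu : 0 < u) (hv : 0 < v) :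
    cfc (fun t : ℝ => t ^ u) a * cfc (fun t : ℝ => t ^ v) a = cfc (fun t : ℝ => t ^ (u + v)) a := by
  rw [← cfc_mul _ _ a (Real.continuous_rpow_const hu.le).continuousOn
    (Real.continuous_rpow_const hv.le).continuousOn]
  exact cfc_congr fun t ht => (Real.rpow_add' (spectrum_nonneg_of_nonneg ha ht) (by linarith)).symm

lemma IsSelfAdjoint.norm_add_sq_le {a b : A} (ha : IsSelfAdjoint a) (hb : IsSelfAdjoint b) :
    ‖a + b‖ ^ 2 ≤ 2 * ‖a * a + b * b‖ := by
  have hsq (c : A) (hc : IsSelfAdjoint c) : 0 ≤ c * c := by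
    simpa only [hc.star_eq] using star_mul_self_nonneg c
  have hle : (a + b) * (a + b) ≤ (2 : ℝ) • (a * a + b * b) := by
    rw [← sub_nonneg, show (2 : ℝ) • (a * a + b * b) - (a + b) * (a + b) = (a - b) * (a - b) by
      rw [two_smul]; noncomm_ring]
    exact hsq _ (ha.sub hb)
  calc ‖a + b‖ ^ 2 = ‖(a + b) * (a + b)‖ := by
        rw [sq, ← CStarRing.norm_star_mul_self, (ha.add hb).star_eq]
    _ ≤ ‖(2 : ℝ) • (a * a + b * b)‖ :=
        CStarAlgebra.norm_le_norm_of_nonneg_of_le (hsq _ (ha.add hb)) hle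
    _ = 2 * ‖a * a + b * b‖ := by rw [norm_smul, Real.norm_two]

lemma norm_cfc_le_of_monotoneOn {a : A} (ha : 0 ≤ a) {f : ℝ → ℝ}
    (hf : MonotoneOn f (Set.Ici 0)) (hf0 : ∀ t, 0 ≤ t → 0 ≤ f t) : ‖cfc f a‖ ≤ f ‖a‖ := by
  refine norm_cfc_le (hf0 _ (norm_nonneg a)) fun t ht => ?_
  obtain ⟨ht0, hta⟩ := spectrum_subset_Icc_norm ha ht
  rw [Real.norm_of_nonneg (hf0 t ht0)]
  exact hf ht0 (norm_nonneg a) hta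

lemma apply_norm_le_norm_cfc [Nontrivial A] {a : A} (ha : 0 ≤ a) {f : ℝ → ℝ}
    (hf : ContinuousOn f (spectrum ℝ a)) : f ‖a‖ ≤ ‖cfc f a‖ :=
  (Real.le_norm_self _).trans
    (norm_apply_le_norm_cfc f a (CStarAlgebra.norm_mem_spectrum_of_nonneg ha) hf ha.isSelfAdjoint)

lemma add_one_sub_sqrt_eq_cfc_sqrtGap {a : A} (ha : 0 ≤ a) :
    a + 1 - CFC.sqrt (2 • a + 1) = cfc sqrtGap a := by
  have hlin : cfc (fun t : ℝ => 2 * t + 1) a = 2 • a + 1 := by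
    rw [cfc_add .., cfc_const_mul_id 2 a, cfc_const_one ℝ a, ofNat_smul_eq_nsmul (R := ℝ)]
  have hnonneg : 0 ≤ cfc (fun t : ℝ => 2 * t + 1) a :=
    cfc_nonneg fun t ht => by linarith [spectrum_nonneg_of_nonneg ha ht]
  rw [← hlin, CFC.sqrt_eq_real_sqrt _ hnonneg, cfcₙ_eq_cfc, ← cfc_comp' Real.sqrt _ a]
  unfold sqrtGap
  rw [cfc_sub .., cfc_add .., cfc_id' ℝ a, cfc_const_one ℝ a]

end CStarAlgebra

section Hilbert

variable {H : Type*} [NormedAddCommGroup H] [InnerProductSpace ℂ H]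

lemma re_inner_le_re_inner_of_le {S T : H →L[ℂ] H} (h : S ≤ T) (x : H) :
    re ⟪S x, x⟫_ℂ ≤ re ⟪T x, x⟫_ℂ := by
  have := ((le_def S T).1 h).re_inner_nonneg_left x
  rwa [sub_apply, inner_sub_left, map_sub, sub_nonneg] at this

lemma re_inner_nonneg_of_nonneg {T : H →L[ℂ] H} (hT : 0 ≤ T) (x : H) : 0 ≤ re ⟪T x, x⟫_ℂ :=
  ((nonneg_iff_isPositive T).1 hT).re_inner_nonneg_left x

lemma re_inner_le_norm_of_norm_eq_one (T : H →L[ℂ] H) {x : H} (hx : ‖x‖ = 1) :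
    re ⟪T x, x⟫_ℂ ≤ ‖T‖ := by
  simpa [hx] using (re_inner_le_norm (𝕜 := ℂ) (T x) x).trans
    (mul_le_mul_of_nonneg_right (T.le_opNorm x) (norm_nonneg x))

lemma re_inner_add_algebraMap (T : H →L[ℂ] H) (c : ℝ) (x : H) :
    re ⟪(T + algebraMap ℝ (H →L[ℂ] H) c) x, x⟫_ℂ = re ⟪T x, x⟫_ℂ + c * ‖x‖ ^ 2 := by
  simp [Algebra.algebraMap_eq_smul_one, ← inner_self_eq_norm_sq (𝕜 := ℂ)]

variable [CompleteSpace H]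

lemma norm_apply_sq_eq_re_inner_star_mul (T : H →L[ℂ] H) (x : H) :
    ‖T x‖ ^ 2 = re ⟪(star T * T) x, x⟫_ℂ :=
  apply_norm_sq_eq_inner_adjoint_left T x

lemma opAbs_eq_cfc_sqrt (A : H →L[ℂ] H) : opAbs A = cfc Real.sqrt (star A * A) := by
  rw [opAbs, ← star_eq_adjoint, CFC.sqrt_eq_real_sqrt _ (star_mul_self_nonneg A), cfcₙ_eq_cfc]

lemma opAbs_adjoint_eq_cfc_sqrt (A : H →L[ℂ] H) :
    opAbs (adjoint A) = cfc Real.sqrt (A * star A) := by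
  rw [opAbs_eq_cfc_sqrt, ← star_eq_adjoint, star_star]

lemma opAbs_nonneg (A : H →L[ℂ] H) : 0 ≤ opAbs A := CFC.sqrt_nonneg _

lemma norm_inner_sq_le_of_mul_eq_one (A : H →L[ℂ] H) {h k : H →L[ℂ] H} (hh : IsSelfAdjoint h)
    (hk : IsSelfAdjoint k) (hhk : h * k = 1) (x y : H) :
    ‖⟪A x, y⟫_ℂ‖ ^ 2 ≤ re ⟪(k * k) x, x⟫_ℂ * re ⟪(A * (h * h) * star A) y, y⟫_ℂ := by
  have hfactor : ⟪A x, y⟫_ℂ = ⟪k x, h (star A y)⟫_ℂ := by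
    calc ⟪A x, y⟫_ℂ = ⟪(A * h) (k x), y⟫_ℂ := by
          rw [mul_apply_eq_comp, ← mul_apply_eq_comp h k, hhk, one_apply_eq_self]
      _ = ⟪k x, h (star A y)⟫_ℂ := by
          rw [← adjoint_inner_right, ← star_eq_adjoint, star_mul, hh.star_eq, mul_apply_eq_comp]
  have hkx : ‖k x‖ ^ 2 = re ⟪(k * k) x, x⟫_ℂ := by
    rw [norm_apply_sq_eq_re_inner_star_mul, hk.star_eq]
  have hhy : ‖h (star A y)‖ ^ 2 = re ⟪(A * (h * h) * star A) y, y⟫_ℂ := by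
    rw [← mul_apply_eq_comp, norm_apply_sq_eq_re_inner_star_mul, star_mul, star_star, hh.star_eq,
      mul_assoc, mul_assoc, mul_assoc]
  rw [← hkx, ← hhy, ← mul_pow, hfactor]
  gcongr
  exact norm_inner_le_norm _ _

/-- The regularisation makes `|A| + ε` invertible, so that `A = A h k` with
`k = (|A| + ε) ^ (1 / 2)` and `h = k⁻¹`. -/
lemma norm_inner_sq_le_add_mul (A : H →L[ℂ] H) (x y : H) {ε : ℝ} (hε : 0 < ε) :
    ‖⟪A x, y⟫_ℂ‖ ^ 2 ≤
      (re ⟪opAbs A x, x⟫_ℂ + ε * ‖x‖ ^ 2) * re ⟪opAbs (adjoint A) y, y⟫_ℂ := by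
  set P := star A * A
  have hpos (t : ℝ) : 0 < √t + ε := by positivity
  have hsqrt : Continuous fun t => √(√t + ε) := by fun_prop
  have hinv : Continuous fun t => (√(√t + ε))⁻¹ :=
    hsqrt.inv₀ fun t => (Real.sqrt_pos.2 (hpos t)).ne'
  set k := cfc (fun t => √(√t + ε)) P
  set h := cfc (fun t => (√(√t + ε))⁻¹) P
  have hhk : h * k = 1 := by
    rw [← cfc_mul _ _ P hinv.continuousOn hsqrt.continuousOn, ← cfc_one ℝ P]
    exact cfc_congr fun t _ => inv_mul_cancel₀ (Real.sqrt_pos.2 (hpos t)).ne'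
  have hkk : k * k = opAbs A + algebraMap ℝ _ ε := by
    rw [← cfc_mul _ _ P hsqrt.continuousOn hsqrt.continuousOn, opAbs_eq_cfc_sqrt,
      ← cfc_const ε P, ← cfc_add ..]
    exact cfc_congr fun t _ => Real.mul_self_sqrt (hpos t).le
  have hhh : h * h = cfc (fun t => (√t + ε)⁻¹) P := by
    rw [← cfc_mul _ _ P hinv.continuousOn hinv.continuousOn]
    exact cfc_congr fun t _ => by rw [← mul_inv, Real.mul_self_sqrt (hpos t).le]
  have hbound := norm_inner_sq_le_of_mul_eq_one A (cfc_predicate _ P) (cfc_predicate _ P) hhk x y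
  rw [hkk, re_inner_add_algebraMap, hhh] at hbound
  refine hbound.trans (mul_le_mul_of_nonneg_left ?_ ?_)
  · rw [opAbs_adjoint_eq_cfc_sqrt]
    exact re_inner_le_re_inner_of_le (mul_cfc_inv_sqrt_add_mul_star_le A hε) y
  · exact add_nonneg (re_inner_nonneg_of_nonneg (opAbs_nonneg A) x) (by positivity)

lemma norm_inner_sq_le_re_inner_opAbs_mul (A : H →L[ℂ] H) (x y : H) :
    ‖⟪A x, y⟫_ℂ‖ ^ 2 ≤ re ⟪opAbs A x, x⟫_ℂ * re ⟪opAbs (adjoint A) y, y⟫_ℂ := by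
  set u := re ⟪opAbs A x, x⟫_ℂ
  set v := re ⟪opAbs (adjoint A) y, y⟫_ℂ
  have hlim : Tendsto (fun ε : ℝ => (u + ε * ‖x‖ ^ 2) * v) (𝓝[>] 0) (𝓝 (u * v)) := by
    have hcont : Continuous fun ε : ℝ => (u + ε * ‖x‖ ^ 2) * v := by fun_prop
    simpa using (hcont.tendsto 0).mono_left nhdsWithin_le_nhds
  exact ge_of_tendsto hlim
    (eventually_nhdsWithin_of_forall fun ε hε => norm_inner_sq_le_add_mul A x y hε)

lemma affine_le_re_inner_cfc {P : H →L[ℂ] H} (hP : IsSelfAdjoint P) {f : ℝ → ℝ}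
    (hf : ContinuousOn f (spectrum ℝ P)) {α β : ℝ} (h : ∀ t ∈ spectrum ℝ P, α + β * t ≤ f t)
    {x : H} (hx : ‖x‖ = 1) : α + β * re ⟪P x, x⟫_ℂ ≤ re ⟪cfc f P x, x⟫_ℂ := by
  have hlin : cfc (fun t => α + β * t) P = β • P + algebraMap ℝ _ α := by
    rw [cfc_add .., cfc_const α P, cfc_const_mul_id β P, add_comm]
  have := re_inner_le_re_inner_of_le (cfc_mono h (by fun_prop) hf) x
  rw [hlin, re_inner_add_algebraMap, hx] at this
  simpa [inner_smul_real_left, add_comm] using this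

lemma rpow_re_inner_le_re_inner_cfc_rpow {P : H →L[ℂ] H} (hP : 0 ≤ P) {x : H} (hx : ‖x‖ = 1)
    {s : ℝ} (hs : 1 ≤ s) : re ⟪P x, x⟫_ℂ ^ s ≤ re ⟪cfc (fun t : ℝ => t ^ s) P x, x⟫_ℂ := by
  set c := re ⟪P x, x⟫_ℂ
  have hc : 0 ≤ c := re_inner_nonneg_of_nonneg hP x
  have h := affine_le_re_inner_cfc hP.isSelfAdjoint (f := fun t : ℝ => t ^ s)
    (Real.continuous_rpow_const (by linarith)).continuousOn
    (α := -((s - 1) * c ^ s)) (β := s * c ^ (s - 1))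
    (fun t ht => by linarith [rpow_tangent_le hs hc (spectrum_nonneg_of_nonneg hP ht)]) hx
  have hcs : c ^ (s - 1) * c = c ^ s := by
    conv_rhs => rw [show s = s - 1 + 1 by ring, Real.rpow_add' hc (by linarith), Real.rpow_one]
  calc c ^ s = -((s - 1) * c ^ s) + s * c ^ (s - 1) * c := by rw [mul_assoc, hcs]; ring
    _ ≤ _ := h

lemma numericalRadius_rpow_le_of_forall {A : H →L[ℂ] H} {r c : ℝ} (hr : 0 < r) (hc : 0 ≤ c)
    (h : ∀ x : H, ‖x‖ = 1 → ‖⟪A x, x⟫_ℂ‖ ^ r ≤ c) : numericalRadius A ^ r ≤ c := by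
  have hle : numericalRadius A ≤ c ^ r⁻¹ :=
    Real.iSup_le (fun x => (Real.le_rpow_inv_iff_of_pos (norm_nonneg _) hc hr).2 (h x x.2))
      (by positivity)
  have hnonneg : 0 ≤ numericalRadius A := Real.iSup_nonneg fun x => norm_nonneg _
  exact (Real.le_rpow_inv_iff_of_pos hnonneg hc hr).1 hle

noncomputable def absRpowSum (A : H →L[ℂ] H) (r : ℝ) : H →L[ℂ] H :=
  cfc (fun x : ℝ => x ^ r) (opAbs A) + cfc (fun x : ℝ => x ^ r) (opAbs (adjoint A)) +
    cfc (fun x : ℝ => x ^ (r / 2)) (opAbs A) + cfc (fun x : ℝ => x ^ (r / 2)) (opAbs (adjoint A))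

lemma absRpowSum_nonneg (A : H →L[ℂ] H) (r : ℝ) : 0 ≤ absRpowSum A r := by
  have h (B : H →L[ℂ] H) (s : ℝ) : 0 ≤ cfc (fun x : ℝ => x ^ s) (opAbs B) :=
    cfc_nonneg fun t ht => Real.rpow_nonneg (spectrum_nonneg_of_nonneg (opAbs_nonneg B) ht) s
  unfold absRpowSum
  exact add_nonneg (add_nonneg (add_nonneg (h _ _) (h _ _)) (h _ _)) (h _ _)

lemma norm_inner_rpow_le_sqrtGap (A : H →L[ℂ] H) {x : H} (hx : ‖x‖ = 1) {r : ℝ} (hr : 2 ≤ r) :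
    ‖⟪A x, x⟫_ℂ‖ ^ r ≤ sqrtGap (re ⟪absRpowSum A r x, x⟫_ℂ) / 2 := by
  set u := re ⟪opAbs A x, x⟫_ℂ
  set v := re ⟪opAbs (adjoint A) x, x⟫_ℂ
  have hu : 0 ≤ u := re_inner_nonneg_of_nonneg (opAbs_nonneg A) x
  have hv : 0 ≤ v := re_inner_nonneg_of_nonneg (opAbs_nonneg (adjoint A)) x
  have hsq (w : ℝ) (hw : 0 ≤ w) : (w ^ (r / 2)) ^ 2 = w ^ r := by
    rw [← Real.rpow_mul_natCast hw]; ring_nf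
  have hmc (B : H →L[ℂ] H) (s : ℝ) (hs : 1 ≤ s) :
      re ⟪opAbs B x, x⟫_ℂ ^ s ≤ re ⟪cfc (fun t : ℝ => t ^ s) (opAbs B) x, x⟫_ℂ :=
    rpow_re_inner_le_re_inner_cfc_rpow (opAbs_nonneg B) hx hs
  have hschwarz : ‖⟪A x, x⟫_ℂ‖ ^ r ≤ u ^ (r / 2) * v ^ (r / 2) := by
    calc ‖⟪A x, x⟫_ℂ‖ ^ r = (‖⟪A x, x⟫_ℂ‖ ^ 2) ^ (r / 2) := by
          rw [← Real.rpow_natCast, ← Real.rpow_mul (norm_nonneg _)]; ring_nf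
      _ ≤ (u * v) ^ (r / 2) := by gcongr; exact norm_inner_sq_le_re_inner_opAbs_mul A x x
      _ = u ^ (r / 2) * v ^ (r / 2) := Real.mul_rpow hu hv
  have hsum : (u ^ (r / 2)) ^ 2 + (v ^ (r / 2)) ^ 2 + u ^ (r / 2) + v ^ (r / 2) ≤
      re ⟪absRpowSum A r x, x⟫_ℂ := by
    simp only [absRpowSum, add_apply, inner_add_left, map_add, hsq u hu, hsq v hv]
    linarith [hmc A r (by linarith), hmc (adjoint A) r (by linarith),
      hmc A (r / 2) (by linarith), hmc (adjoint A) (r / 2) (by linarith)]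
  have hsum_nonneg : 0 ≤ (u ^ (r / 2)) ^ 2 + (v ^ (r / 2)) ^ 2 + u ^ (r / 2) + v ^ (r / 2) := by
    positivity
  calc ‖⟪A x, x⟫_ℂ‖ ^ r ≤ u ^ (r / 2) * v ^ (r / 2) := hschwarz
    _ ≤ sqrtGap ((u ^ (r / 2)) ^ 2 + (v ^ (r / 2)) ^ 2 + u ^ (r / 2) + v ^ (r / 2)) / 2 :=
        mul_le_half_sqrtGap (by positivity) (by positivity)
    _ ≤ sqrtGap (re ⟪absRpowSum A r x, x⟫_ℂ) / 2 := by
        gcongr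
        exact monotoneOn_sqrtGap hsum_nonneg (hsum_nonneg.trans hsum) hsum

lemma numericalRadius_rpow_le_half_norm_cfc_sqrtGap (A : H →L[ℂ] H) {r : ℝ} (hr : 2 ≤ r) :
    numericalRadius A ^ r ≤ 1 / 2 * ‖cfc sqrtGap (absRpowSum A r)‖ := by
  have hX := absRpowSum_nonneg A r
  refine numericalRadius_rpow_le_of_forall (by linarith) (by positivity) fun x hx => ?_
  have : Nontrivial H := ⟨x, 0, fun h => by simp [h] at hx⟩
  calc ‖⟪A x, x⟫_ℂ‖ ^ r ≤ sqrtGap (re ⟪absRpowSum A r x, x⟫_ℂ) / 2 :=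
        norm_inner_rpow_le_sqrtGap A hx hr
    _ ≤ sqrtGap ‖absRpowSum A r‖ / 2 := by
        gcongr
        exact monotoneOn_sqrtGap (re_inner_nonneg_of_nonneg hX x) (norm_nonneg _)
          (re_inner_le_norm_of_norm_eq_one _ hx)
    _ ≤ 1 / 2 * ‖cfc sqrtGap (absRpowSum A r)‖ := by
        rw [div_eq_inv_mul, one_div]
        gcongr
        exact apply_norm_le_norm_cfc hX continuous_sqrtGap.continuousOn

lemma norm_cfc_sqrtGap_absRpowSum_le (A : H →L[ℂ] H) {r : ℝ} (hr : 0 < r) :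
    ‖cfc sqrtGap (absRpowSum A r)‖ ≤
      ‖cfc (fun x : ℝ => x ^ r) (opAbs A) + cfc (fun x : ℝ => x ^ r) (opAbs (adjoint A))‖ := by
  set T₁ := cfc (fun x : ℝ => x ^ r) (opAbs A)
  set T₂ := cfc (fun x : ℝ => x ^ r) (opAbs (adjoint A))
  set S₁ := cfc (fun x : ℝ => x ^ (r / 2)) (opAbs A)
  set S₂ := cfc (fun x : ℝ => x ^ (r / 2)) (opAbs (adjoint A))
  have hST (B : H →L[ℂ] H) :
      cfc (fun x : ℝ => x ^ (r / 2)) (opAbs B) * cfc (fun x : ℝ => x ^ (r / 2)) (opAbs B) =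
        cfc (fun x : ℝ => x ^ r) (opAbs B) := by
    rw [cfc_rpow_mul_cfc_rpow (opAbs_nonneg B) (by linarith) (by linarith), add_halves]
  have hS : ‖S₁ + S₂‖ ^ 2 ≤ 2 * ‖T₁ + T₂‖ := by
    have h₁ : S₁ * S₁ = T₁ := hST A
    have h₂ : S₂ * S₂ = T₂ := hST (adjoint A)
    simpa only [h₁, h₂] using IsSelfAdjoint.norm_add_sq_le (a := S₁) (b := S₂)
      (cfc_predicate _ _) (cfc_predicate _ _)
  have hX : ‖absRpowSum A r‖ ≤ ‖T₁ + T₂‖ + ‖S₁ + S₂‖ := by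
    rw [absRpowSum, add_assoc (T₁ + T₂)]
    exact norm_add_le _ _
  exact (norm_cfc_le_of_monotoneOn (absRpowSum_nonneg A r) monotoneOn_sqrtGap
    fun t => sqrtGap_nonneg).trans (sqrtGap_le (norm_nonneg _) hX hS)

end Hilbert

set_option synthInstance.maxHeartbeats 1000000 in
set_option maxHeartbeats 1000000 in
theorem numericalRadius_rpow_le
    {H : Type*} [NormedAddCommGroup H] [InnerProductSpace ℂ H] [CompleteSpace H]
    (A : H →L[ℂ] H) (r : ℝ) (hr : 2 ≤ r) :
    numericalRadius A ^ r ≤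
        (1 / 2) * ‖cfc (fun x : ℝ => x ^ r) (opAbs A) +
          cfc (fun x : ℝ => x ^ r) (opAbs (ContinuousLinearMap.adjoint A)) +
          cfc (fun x : ℝ => x ^ (r / 2)) (opAbs A) +
          cfc (fun x : ℝ => x ^ (r / 2)) (opAbs (ContinuousLinearMap.adjoint A)) + 1 -
          CFC.sqrt (2 • (cfc (fun x : ℝ => x ^ r) (opAbs A) +
            cfc (fun x : ℝ => x ^ r) (opAbs (ContinuousLinearMap.adjoint A)) +
            cfc (fun x : ℝ => x ^ (r / 2)) (opAbs A) +
            cfc (fun x : ℝ => x ^ (r / 2)) (opAbs (ContinuousLinearMap.adjoint A))) + 1)‖ ∧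
      (1 / 2) * ‖cfc (fun x : ℝ => x ^ r) (opAbs A) +
          cfc (fun x : ℝ => x ^ r) (opAbs (ContinuousLinearMap.adjoint A)) +
          cfc (fun x : ℝ => x ^ (r / 2)) (opAbs A) +
          cfc (fun x : ℝ => x ^ (r / 2)) (opAbs (ContinuousLinearMap.adjoint A)) + 1 -
          CFC.sqrt (2 • (cfc (fun x : ℝ => x ^ r) (opAbs A) +
            cfc (fun x : ℝ => x ^ r) (opAbs (ContinuousLinearMap.adjoint A)) +
            cfc (fun x : ℝ => x ^ (r / 2)) (opAbs A) +
            cfc (fun x : ℝ => x ^ (r / 2)) (opAbs (ContinuousLinearMap.adjoint A))) + 1)‖ ≤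
        (1 / 2) * ‖cfc (fun x : ℝ => x ^ r) (opAbs A) +
          cfc (fun x : ℝ => x ^ r) (opAbs (ContinuousLinearMap.adjoint A))‖ := by
  have hX : cfc (fun x : ℝ => x ^ r) (opAbs A) + cfc (fun x : ℝ => x ^ r) (opAbs (adjoint A)) +
      cfc (fun x : ℝ => x ^ (r / 2)) (opAbs A) +
      cfc (fun x : ℝ => x ^ (r / 2)) (opAbs (adjoint A)) = absRpowSum A r := rfl
  rw [hX, add_one_sub_sqrt_eq_cfc_sqrtGap (absRpowSum_nonneg A r)]
  exact ⟨numericalRadius_rpow_le_half_norm_cfc_sqrtGap A hr,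
    by gcongr; exact norm_cfc_sqrtGap_absRpowSum_le A (by linarith)⟩
end
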